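/- Suppose λ > 0. Let (T, Y) be a mild solution of the wildfire system on [0, t*] with bounded initial data (T_0, Y_0), Y_0 ≥ 0. Then for every t ∈ [0, t*]: ‖T(·,t)‖_{L^∞(ℝ^d)} ≤ e^{−λt} ‖T_0‖_{L^∞(ℝ^d)} + λ^{−1} ‖Y_0‖_{L^∞(ℝ^d)}. -/

import Mathlib

/-! The heat semigroup is a contraction on `L^∞`, its kernel being a probability density, and
the reaction term `Y r(T)` is bounded by `‖Y₀‖_∞` because the fuel only decreases and
`0 ≤ r ≤ 1`. The Duhamel formula then bounds `‖T(·,t)‖_∞` by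
`e^{-λt} ‖T₀‖_∞ + ‖Y₀‖_∞ ∫₀ᵗ e^{-λ(t-τ)} dτ ≤ e^{-λt} ‖T₀‖_∞ + λ⁻¹ ‖Y₀‖_∞`. -/

open MeasureTheory Real Set Filter ENNReal

noncomputable section

/-- Euclidean space `ℝ^d`. -/
abbrev Rd (d : ℕ) := EuclideanSpace ℝ (Fin d)

/-- The Arrhenius reaction rate: `r(T) = exp(-1/T)` for `T > 0`, `0` otherwise. -/
noncomputable def rrate (T : ℝ) : ℝ := if 0 < T then Real.exp (-1 / T) else 0

/-- The heat semigroup `e^{tΔ}φ`, given by convolution with the heat kernel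
`Φ_t(x) = (4πt)^{-d/2} exp(-|x|²/(4t))` for `t ≠ 0`, and the identity at `t = 0`. -/
noncomputable def heatConv (d : ℕ) (t : ℝ) (φ : Rd d → ℝ) : Rd d → ℝ :=
  if t = 0 then φ
  else fun x => ∫ y : Rd d,
    (4 * Real.pi * t) ^ (-(d : ℝ) / 2) * Real.exp (-‖x - y‖ ^ 2 / (4 * t)) * φ y

/-- The Duhamel representative of the temperature at time `t`:
`e^{-λt} e^{tΔ} T₀ + ∫₀ᵗ e^{-λ(t-τ)} e^{(t-τ)Δ}[Y(·,τ) r(T(·,τ))] dτ`. -/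
noncomputable def duhamelRep (d : ℕ) (lam : ℝ) (T0 : Rd d → ℝ)
    (T Y : Rd d → ℝ → ℝ) (t : ℝ) (x : Rd d) : ℝ :=
  Real.exp (-lam * t) * heatConv d t T0 x
    + ∫ τ in Set.Ioc (0 : ℝ) t,
        Real.exp (-lam * (t - τ)) *
          heatConv d (t - τ) (fun y => Y y τ * rrate (T y τ)) x

/-- Continuity of the curve `t ↦ T(·,t)` into `L^p(ℝ^d)`, on the time set `I`. -/
def ContinuousIntoLp (d : ℕ) (p : ℝ≥0∞) (I : Set ℝ) (T : Rd d → ℝ → ℝ) : Prop :=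
  ∀ t₀ ∈ I, Filter.Tendsto (fun t => eLpNorm (fun x => T x t - T x t₀) p volume)
    (nhdsWithin t₀ I) (nhds 0)

/-- A mild solution `(T, Y)` of the wildfire reaction-diffusion system
`T_t = (Δ - λ)T + Y r(T)`, `Y_t = -β Y r(T)` with data `(T₀, Y₀)`, on the time set `I`:
the temperature satisfies the Duhamel formula (a.e. in `x`) and the fuel satisfies
`Y(x,t) = Y₀(x) exp(-β ∫₀ᵗ r(T(x,σ)) dσ)`, with both curves continuous into `L^∞`. -/
structure IsMildSolutionOn (d : ℕ) (lam beta : ℝ) (I : Set ℝ)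
    (T0 Y0 : Rd d → ℝ) (T Y : Rd d → ℝ → ℝ) : Prop where
  meas_T0 : Measurable T0
  meas_Y0 : Measurable Y0
  bdd_T0 : eLpNorm T0 ⊤ volume < ⊤
  bdd_Y0 : eLpNorm Y0 ⊤ volume < ⊤
  meas_T : ∀ t ∈ I, Measurable fun x => T x t
  meas_Y : ∀ t ∈ I, Measurable fun x => Y x t
  cont_T : ContinuousIntoLp d ⊤ I T
  cont_Y : ContinuousIntoLp d ⊤ I Y
  duhamel : ∀ t ∈ I, (fun x => T x t) =ᵐ[volume] duhamelRep d lam T0 T Y t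
  fuel : ∀ x, ∀ t ∈ I,
    Y x t = Y0 x * Real.exp (-beta * ∫ σ in Set.Ioc (0 : ℝ) t, rrate (T x σ))

/-- The `X_{t*}`-norm: `sup_{t ∈ I} [(1+t)^{d/2} ‖T(·,t)‖_{L^∞} + ‖T(·,t)‖_{L¹}]`. -/
noncomputable def XnormOn (d : ℕ) (I : Set ℝ) (T : Rd d → ℝ → ℝ) : ℝ≥0∞ :=
  ⨆ t ∈ I, (ENNReal.ofReal ((1 + t) ^ ((d : ℝ) / 2)) * eLpNorm (fun x => T x t) ⊤ volume
    + eLpNorm (fun x => T x t) 1 volume)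

end

lemma rrate_nonneg (T : ℝ) : 0 ≤ rrate T := by
  unfold rrate
  split <;> positivity

lemma rrate_le_one (T : ℝ) : rrate T ≤ 1 := by
  unfold rrate
  split_ifs with hT
  · exact exp_le_one_iff.mpr (div_nonpos_of_nonpos_of_nonneg (by norm_num) hT.le)
  · norm_num

lemma ae_norm_le_toReal_eLpNorm_top {α E : Type*} [MeasurableSpace α] {μ : Measure α}
    [NormedAddCommGroup E] {f : α → E} (hf : eLpNorm f ⊤ μ ≠ ⊤) :
    ∀ᵐ x ∂μ, ‖f x‖ ≤ (eLpNorm f ⊤ μ).toReal := by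
  filter_upwards [enorm_ae_le_eLpNormEssSup f μ] with x hx
  rw [eLpNorm_exponent_top] at hf ⊢
  simpa using ENNReal.toReal_mono hf hx

noncomputable def heatKernel (d : ℕ) (t : ℝ) (z : Rd d) : ℝ :=
  (4 * π * t) ^ (-(d : ℝ) / 2) * exp (-‖z‖ ^ 2 / (4 * t))

section HeatKernel

variable {d : ℕ} {t : ℝ}

lemma heatConv_of_ne_zero (ht : t ≠ 0) (φ : Rd d → ℝ) (x : Rd d) :
    heatConv d t φ x = ∫ y, heatKernel d t (x - y) * φ y := by
  simp only [heatConv, if_neg ht, heatKernel]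

lemma heatKernel_nonneg (ht : 0 ≤ t) (z : Rd d) : 0 ≤ heatKernel d t z := by
  unfold heatKernel
  have : 0 ≤ 4 * π * t := by positivity
  positivity

lemma integral_heatKernel (ht : 0 < t) : ∫ z, heatKernel d t z = 1 := by
  have hb : 0 < (4 * t)⁻¹ := by positivity
  have h4πt : 0 < 4 * π * t := by positivity
  have hexp : ∀ z : Rd d, -‖z‖ ^ 2 / (4 * t) = -(4 * t)⁻¹ * ‖z‖ ^ 2 := fun z => by ring
  simp_rw [heatKernel, hexp]
  rw [integral_const_mul, GaussianFourier.integral_rexp_neg_mul_sq_norm hb,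
    finrank_euclideanSpace_fin, show π / (4 * t)⁻¹ = 4 * π * t by field_simp, ← rpow_add h4πt,
    neg_div, neg_add_cancel, Real.rpow_zero]

lemma integrable_heatKernel (ht : 0 < t) : Integrable (heatKernel d t) :=
  .of_integral_ne_zero (by simp [integral_heatKernel ht])

/-- The kernel `Φ_t(x - ·)` is a probability density. -/
lemma norm_heatConv_le (ht : 0 < t) {φ : Rd d → ℝ} {M : ℝ} (hφ : ∀ᵐ y, ‖φ y‖ ≤ M)
    (x : Rd d) : ‖heatConv d t φ x‖ ≤ M := by
  have hK : Integrable fun y => heatKernel d t (x - y) :=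
    (integrable_heatKernel ht).comp_sub_left x
  rw [heatConv_of_ne_zero ht.ne']
  calc ‖∫ y, heatKernel d t (x - y) * φ y‖
      ≤ ∫ y, ‖heatKernel d t (x - y) * φ y‖ := norm_integral_le_integral_norm _
    _ ≤ ∫ y, heatKernel d t (x - y) * M := by
        refine integral_mono_of_nonneg (ae_of_all _ fun _ => norm_nonneg _) (hK.mul_const M) ?_
        filter_upwards [hφ] with y hy
        rw [norm_mul, norm_of_nonneg (heatKernel_nonneg ht.le _)]
        exact mul_le_mul_of_nonneg_left hy (heatKernel_nonneg ht.le _)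
    _ = M := by
        rw [integral_mul_const, integral_sub_left_eq_self (heatKernel d t), integral_heatKernel ht,
          one_mul]

lemma ae_norm_heatConv_le (ht : 0 ≤ t) {φ : Rd d → ℝ} {M : ℝ} (hφ : ∀ᵐ y, ‖φ y‖ ≤ M) :
    ∀ᵐ x, ‖heatConv d t φ x‖ ≤ M := by
  rcases ht.eq_or_lt with rfl | ht
  · simpa [heatConv] using hφ
  · exact ae_of_all _ (norm_heatConv_le ht hφ)

end HeatKernel

lemma integral_exp_neg_mul_sub {lam : ℝ} (hlam : lam ≠ 0) (t : ℝ) :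
    ∫ τ in (0 : ℝ)..t, exp (-lam * (t - τ)) = (1 - exp (-lam * t)) / lam := by
  have hderiv (τ : ℝ) :
      HasDerivAt (fun τ => exp (-lam * (t - τ)) / lam) (exp (-lam * (t - τ))) τ := by
    have := (((hasDerivAt_id τ).const_sub t).const_mul (-lam)).exp.div_const lam
    refine this.congr_deriv ?_
    field_simp
    simp
  rw [intervalIntegral.integral_eq_sub_of_hasDerivAt (fun τ _ => hderiv τ)
    ((by fun_prop : Continuous fun τ => exp (-lam * (t - τ))).intervalIntegrable _ _)]
  simp [sub_div]

lemma setIntegral_Ioc_exp_neg_mul_sub_le {lam : ℝ} (hlam : 0 < lam) {t : ℝ} (ht : 0 ≤ t) :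
    ∫ τ in Ioc 0 t, exp (-lam * (t - τ)) ≤ lam⁻¹ := by
  rw [← intervalIntegral.integral_of_le ht, integral_exp_neg_mul_sub hlam.ne', div_eq_mul_inv]
  have := exp_pos (-lam * t)
  have := inv_pos.mpr hlam
  nlinarith

lemma norm_setIntegral_Ioc_duhamel_le {d : ℕ} {lam : ℝ} (hlam : 0 < lam) {t M : ℝ} (ht : 0 ≤ t)
    (hM : 0 ≤ M) {f : ℝ → Rd d → ℝ} (hf : ∀ τ ∈ Ioo 0 t, ∀ᵐ y, ‖f τ y‖ ≤ M) (x : Rd d) :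
    ‖∫ τ in Ioc 0 t, exp (-lam * (t - τ)) * heatConv d (t - τ) (f τ) x‖ ≤ lam⁻¹ * M := by
  have hexp : Integrable (fun τ => exp (-lam * (t - τ)) * M) (volume.restrict (Ioo 0 t)) :=
    (by fun_prop : Continuous fun τ => exp (-lam * (t - τ)) * M).integrableOn_Icc.mono_set
      Ioo_subset_Icc_self
  rw [← setIntegral_congr_set Ioo_ae_eq_Ioc]
  calc ‖∫ τ in Ioo 0 t, exp (-lam * (t - τ)) * heatConv d (t - τ) (f τ) x‖
      ≤ ∫ τ in Ioo 0 t, ‖exp (-lam * (t - τ)) * heatConv d (t - τ) (f τ) x‖ :=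
        norm_integral_le_integral_norm _
    _ ≤ ∫ τ in Ioo 0 t, exp (-lam * (t - τ)) * M := by
        refine integral_mono_of_nonneg (ae_of_all _ fun _ => norm_nonneg _) hexp ?_
        filter_upwards [ae_restrict_mem measurableSet_Ioo] with τ hτ
        rw [norm_mul, norm_of_nonneg (exp_pos _).le]
        exact mul_le_mul_of_nonneg_left
          (norm_heatConv_le (sub_pos.mpr hτ.2) (hf τ hτ) x) (exp_pos _).le
    _ = (∫ τ in Ioc 0 t, exp (-lam * (t - τ))) * M := by
        rw [integral_mul_const, setIntegral_congr_set Ioo_ae_eq_Ioc]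
    _ ≤ lam⁻¹ * M := mul_le_mul_of_nonneg_right (setIntegral_Ioc_exp_neg_mul_sub_le hlam ht) hM

namespace IsMildSolutionOn

variable {d : ℕ} {lam beta : ℝ} {I : Set ℝ} {T0 Y0 : Rd d → ℝ} {T Y : Rd d → ℝ → ℝ}

/-- Since `β ≥ 0` the fuel only burns, and `0 ≤ r ≤ 1`. -/
lemma norm_reaction_le (hsol : IsMildSolutionOn d lam beta I T0 Y0 T Y) (hbeta : 0 ≤ beta)
    (x : Rd d) {t : ℝ} (ht : t ∈ I) : ‖Y x t * rrate (T x t)‖ ≤ ‖Y0 x‖ := by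
  have hburn : exp (-beta * ∫ σ in Ioc 0 t, rrate (T x σ)) ≤ 1 :=
    exp_le_one_iff.mpr (mul_nonpos_of_nonpos_of_nonneg (neg_nonpos.mpr hbeta)
      (integral_nonneg fun _ => rrate_nonneg _))
  rw [hsol.fuel x t ht, norm_mul, norm_mul, norm_of_nonneg (exp_pos _).le,
    norm_of_nonneg (rrate_nonneg _)]
  calc ‖Y0 x‖ * exp (-beta * ∫ σ in Ioc 0 t, rrate (T x σ)) * rrate (T x t)
      ≤ ‖Y0 x‖ * 1 * 1 := by gcongr; exacts [rrate_nonneg _, rrate_le_one _]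
    _ = ‖Y0 x‖ := by ring

lemma ae_norm_le {tstar : ℝ} (hsol : IsMildSolutionOn d lam beta (Icc 0 tstar) T0 Y0 T Y)
    (hlam : 0 < lam) (hbeta : 0 ≤ beta) {MT MY : ℝ} (hT0 : ∀ᵐ x, ‖T0 x‖ ≤ MT)
    (hY0 : ∀ᵐ x, ‖Y0 x‖ ≤ MY) (hMY : 0 ≤ MY) {t : ℝ} (ht : t ∈ Icc 0 tstar) :
    ∀ᵐ x, ‖T x t‖ ≤ exp (-lam * t) * MT + lam⁻¹ * MY := by
  have hreaction : ∀ τ ∈ Ioo 0 t, ∀ᵐ y, ‖Y y τ * rrate (T y τ)‖ ≤ MY := fun τ hτ => by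
    filter_upwards [hY0] with y hy
    exact (hsol.norm_reaction_le hbeta y ⟨hτ.1.le, hτ.2.le.trans ht.2⟩).trans hy
  filter_upwards [hsol.duhamel t ht, ae_norm_heatConv_le ht.1 hT0] with x hx hheat
  rw [hx, duhamelRep]
  refine (norm_add_le _ _).trans (add_le_add ?_
    (norm_setIntegral_Ioc_duhamel_le hlam ht.1 hMY hreaction x))
  rw [norm_mul, norm_of_nonneg (exp_pos _).le]
  exact mul_le_mul_of_nonneg_left hheat (exp_pos _).le

end IsMildSolutionOn

theorem temperature_linfty_bound_general
    (d : ℕ) (lam beta : ℝ) (hlam : 0 < lam) (hbeta : 0 ≤ beta)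
    (tstar : ℝ)
    (T0 Y0 : Rd d → ℝ) (T Y : Rd d → ℝ → ℝ)
    (hsol : IsMildSolutionOn d lam beta (Set.Icc 0 tstar) T0 Y0 T Y) :
    ∀ t ∈ Set.Icc (0 : ℝ) tstar,
      eLpNorm (fun x => T x t) ⊤ volume
        ≤ ENNReal.ofReal (Real.exp (-lam * t)) * eLpNorm T0 ⊤ volume
          + ENNReal.ofReal lam⁻¹ * eLpNorm Y0 ⊤ volume := by
  intro t ht
  have hbound := hsol.ae_norm_le hlam hbeta (ae_norm_le_toReal_eLpNorm_top hsol.bdd_T0.ne)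
    (ae_norm_le_toReal_eLpNorm_top hsol.bdd_Y0.ne) toReal_nonneg ht
  calc eLpNorm (fun x => T x t) ⊤ volume
      ≤ ENNReal.ofReal (exp (-lam * t) * (eLpNorm T0 ⊤ volume).toReal
          + lam⁻¹ * (eLpNorm Y0 ⊤ volume).toReal) := by
        rw [eLpNorm_exponent_top]
        exact eLpNormEssSup_le_of_ae_bound hbound
    _ = _ := by
        rw [ENNReal.ofReal_add (by positivity) (by positivity),
          ENNReal.ofReal_mul (exp_pos _).le, ENNReal.ofReal_mul (inv_nonneg.mpr hlam.le),
          ofReal_toReal hsol.bdd_T0.ne, ofReal_toReal hsol.bdd_Y0.ne]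

/-- For `λ > 0` and a mild solution on `[0,t*]` with bounded data and
`Y₀ ≥ 0`: `‖T(·,t)‖_{L^∞} ≤ e^{-λt} ‖T₀‖_{L^∞} + λ⁻¹ ‖Y₀‖_{L^∞}` for all `t ∈ [0,t*]`. -/
theorem temperature_linfty_bound
    (d : ℕ) (hd : 1 ≤ d) (lam beta : ℝ) (hlam : 0 < lam) (hbeta : 0 ≤ beta)
    (tstar : ℝ) (htstar : 0 < tstar)
    (T0 Y0 : Rd d → ℝ) (T Y : Rd d → ℝ → ℝ)
    (hY0 : ∀ x, 0 ≤ Y0 x)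
    (hsol : IsMildSolutionOn d lam beta (Set.Icc 0 tstar) T0 Y0 T Y) :
    ∀ t ∈ Set.Icc (0 : ℝ) tstar,
      eLpNorm (fun x => T x t) ⊤ volume
        ≤ ENNReal.ofReal (Real.exp (-lam * t)) * eLpNorm T0 ⊤ volume
          + ENNReal.ofReal lam⁻¹ * eLpNorm Y0 ⊤ volume :=
  temperature_linfty_bound_general d lam beta hlam hbeta tstar T0 Y0 T Y hsol
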